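/- There exists an expansive and primitive 1-dimensional substitution μ over a 3-letter alphabet {a,b,c}, namely μ : a ↦ ca, b ↦ bc, c ↦ cbac, and a factorial language L strictly containing L_μ such that L equals the factorial closure of μ(L). Concretely, taking L to be the set of factors of μ^n(ab) for n ∈ ℕ, one has L = factorial closure of μ(L), ab ∈ L, and ab ∉ L_μ, hence L ⊋ L_μ. -/

import Mathlib

/-- The three-letter alphabet `{a,b,c}`. -/
inductive T3 : Type
  | a | b | c
deriving DecidableEq

open T3

/-- The substitution `μ : a ↦ ca, b ↦ bc, c ↦ cbac`. -/
def mu : T3 → List T3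
  | a => [c, a]
  | b => [b, c]
  | c => [c, b, a, c]

/-- The extension of `μ` to words. -/
def muw (l : List T3) : List T3 := l.flatMap mu

/-- The language `L_μ`: all factors of `μⁿ(x)` for letters `x` and `n ∈ ℕ`. -/
def Lmu : Set (List T3) := {u | ∃ (x : T3) (n : ℕ), u <:+: (muw^[n]) [x]}

/-- The language `L`: all factors of `μⁿ(ab)` for `n ∈ ℕ`. -/
def Lab : Set (List T3) := {u | ∃ n : ℕ, u <:+: (muw^[n]) [a, b]}

/-!
Every image `μ(x)` has length at least 2 and `μ²(x)` contains every letter, so `μ` is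
expansive and primitive.

No image `ca`, `bc`, `cbac` contains `ab`, only `μ(a)` ends with `a` and only `μ(b)` starts
with `b`; hence `ab` occurs in `μ(w)` exactly when it occurs in `w`, and by induction it never
occurs in `μⁿ(x)`. Since `μ(ab) = cabc` contains `ab`, the words `μⁿ(ab)` form a chain of
factors, which makes `L` the factorial closure of `μ(L)`; and since `cabc` contains every
letter, `L_μ ⊆ L`.
-/

open List

@[simp]
lemma muw_nil : muw [] = [] := rfl

@[simp]
lemma muw_cons (x : T3) (l : List T3) : muw (x :: l) = mu x ++ muw l := by
  simp [muw]

lemma muw_infix_muw {u v : List T3} (h : u <:+: v) : muw u <:+: muw v :=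
  h.flatMap mu

lemma muw_iterate_infix_muw_iterate (n : ℕ) {u v : List T3} (h : u <:+: v) :
    (muw^[n]) u <:+: (muw^[n]) v := by
  induction n generalizing u v with
  | zero => exact h
  | succ n ih => exact ih (muw_infix_muw h)

lemma two_mul_length_le_length_muw (l : List T3) : 2 * l.length ≤ (muw l).length := by
  induction l with
  | nil => simp
  | cons x l ih => cases x <;> simp [mu] <;> omega

lemma two_pow_le_length_muw_iterate (m : ℕ) (x : T3) : 2 ^ m ≤ ((muw^[m]) [x]).length := by
  induction m with
  | zero => simp
  | succ m ih =>
    rw [Function.iterate_succ_apply', pow_succ']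
    exact (Nat.mul_le_mul_left 2 ih).trans (two_mul_length_le_length_muw _)

lemma pair_infix_cons_iff {α : Type*} {x y z : α} {l : List α} :
    [x, y] <:+: z :: l ↔ (x = z ∧ [y] <+: l) ∨ [x, y] <:+: l := by
  rw [infix_cons_iff, cons_prefix_cons]

lemma b_prefix_muw_iff (w : List T3) : [b] <+: muw w ↔ [b] <+: w := by
  cases w with
  | nil => simp
  | cons x w => cases x <;> simp [mu]

lemma ab_infix_muw_iff (w : List T3) : [a, b] <:+: muw w ↔ [a, b] <:+: w := by
  induction w with
  | nil => simp
  | cons x w ih => cases x <;> simp [mu, pair_infix_cons_iff, b_prefix_muw_iff, ih]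

lemma ab_not_infix_muw_iterate (n : ℕ) (x : T3) : ¬ [a, b] <:+: (muw^[n]) [x] := by
  induction n with
  | zero => cases x <;> simp [pair_infix_cons_iff]
  | succ n ih => rwa [Function.iterate_succ_apply', ab_infix_muw_iff]

lemma lab_eq_factorial_closure_muw : Lab = {u | ∃ v ∈ Lab, u <:+: muw v} := by
  ext u
  constructor
  · rintro ⟨n, hu⟩
    have hab : [a, b] <:+: muw [a, b] := (ab_infix_muw_iff _).2 (infix_refl _)
    refine ⟨(muw^[n]) [a, b], ⟨n, infix_refl _⟩, hu.trans ?_⟩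
    rw [← Function.iterate_succ_apply' muw n, Function.iterate_succ_apply]
    exact muw_iterate_infix_muw_iterate n hab
  · rintro ⟨v, ⟨n, hv⟩, huv⟩
    refine ⟨n + 1, huv.trans ?_⟩
    rw [Function.iterate_succ_apply']
    exact muw_infix_muw hv

lemma ab_not_mem_lmu : [a, b] ∉ Lmu := by
  rintro ⟨x, n, h⟩
  exact ab_not_infix_muw_iterate n x h

lemma lmu_subset_lab : Lmu ⊆ Lab := by
  rintro u ⟨x, n, h⟩
  have hx : [x] <:+: muw [a, b] := by cases x <;> decide
  exact ⟨n + 1, h.trans (muw_iterate_infix_muw_iterate n hx)⟩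

/-- The substitution `μ : a ↦ ca, b ↦ bc, c ↦ cbac` is expansive and primitive,
and the factorial language `L` of factors of the words `μⁿ(ab)` satisfies
`L = factorial closure of μ(L)`, contains `ab`, while `ab ∉ L_μ`;
hence `L` strictly contains `L_μ`. -/
theorem exists_strict_superset_language :
    (∀ K : ℕ, ∃ m : ℕ, ∀ x : T3, K < ((muw^[m]) [x]).length) ∧
    (∃ m : ℕ, ∀ x y : T3, [y] <:+: (muw^[m]) [x]) ∧
    (Lab = {u | ∃ v ∈ Lab, u <:+: muw v}) ∧
    [a, b] ∈ Lab ∧ [a, b] ∉ Lmu ∧ Lmu ⊂ Lab := by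
  have hab : [a, b] ∈ Lab := ⟨0, infix_refl _⟩
  have expansive (K : ℕ) : ∃ m : ℕ, ∀ x : T3, K < ((muw^[m]) [x]).length :=
    ⟨K, fun x => Nat.lt_two_pow_self.trans_le (two_pow_le_length_muw_iterate K x)⟩
  have primitive (x y : T3) : [y] <:+: (muw^[2]) [x] := by
    cases x <;> cases y <;> decide
  exact ⟨expansive, ⟨2, primitive⟩, lab_eq_factorial_closure_muw, hab, ab_not_mem_lmu,
    Set.ssubset_iff_subset_ne.2 ⟨lmu_subset_lab, fun h => ab_not_mem_lmu (h ▸ hab)⟩⟩
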